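/- arXiv:1702.00361 — 4 statements merged into one kernel-verified Lean document; each statement's English description precedes it below -/
import Mathlib

section
/- Every superset-closed adversary is fair: if A is a superset-closed adversary over a finite set Π, then for every P ⊆ Π and every Q ⊆ P, setcon(A|_{P,Q}) = min(|Q|, setcon(A|_P)). -/
variable {α : Type*} [DecidableEq α]

/-- The restriction `A|_P` of an adversary `A` to a set of processes `P`:
the live sets of `A` that are contained in `P`. -/
def restrict (A : Finset (Finset α)) (P : Finset α) : Finset (Finset α) :=
  A.filter fun S => S ⊆ P

/-- The set consensus power `setcon A` of an adversary `A`: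
`setcon ∅ = 0` and, for `A ≠ ∅`,
`setcon A = 1 + max_{S ∈ A} min_{a ∈ S} setcon (A|_{S \ {a}})`. -/
def setcon (A : Finset (Finset α)) : ℕ :=
  if A = ∅ then 0
  else 1 + A.attach.sup fun S =>
    (S.1.attach.image fun a => setcon (restrict A (S.1.erase a.1))).min.untopD 0
termination_by A.card
decreasing_by
  apply Finset.card_lt_card
  rw [Finset.ssubset_def]
  refine ⟨Finset.filter_subset _ _, fun hsub => ?_⟩
  have hmem := hsub S.2
  rw [restrict, Finset.mem_filter] at hmem
  exact Finset.notMem_erase a.1 S.1 (hmem.2 a.2)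

/-- The restriction `A|_{P,Q}`: live sets of `A` contained in `P` that intersect `Q`. -/
def restrictTo (A : Finset (Finset α)) (P Q : Finset α) : Finset (Finset α) :=
  (restrict A P).filter fun S => (S ∩ Q).Nonempty

/-- An adversary is fair if for all `P` and all `Q ⊆ P`,
`setcon (A|_{P,Q}) = min |Q| (setcon (A|_P))`. -/
def Fair (A : Finset (Finset α)) : Prop :=
  ∀ P Q : Finset α, Q ⊆ P →
    setcon (restrictTo A P Q) = min Q.card (setcon (restrict A P))

/-- `csize A`: the minimal cardinality of a hitting set of `A`, i.e. of a set
intersecting every live set of `A`. -/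
noncomputable def csize (A : Finset (Finset α)) : ℕ :=
  sInf {k | ∃ H : Finset α, H.card = k ∧ ∀ S ∈ A, (H ∩ S).Nonempty}

set_option maxHeartbeats 1000000 in
lemma setcon_ne {A : Finset (Finset α)} (h : A ≠ ∅) :
    setcon A = 1 + A.attach.sup fun S =>
      (S.1.attach.image fun a => setcon (restrict A (S.1.erase a.1))).min.untopD 0 := by
  rw [setcon, if_neg h]

lemma setcon_empty : setcon (∅ : Finset (Finset α)) = 0 := by rw [setcon]; simp

lemma mem_restrict {A : Finset (Finset α)} {P S : Finset α} :
    S ∈ restrict A P ↔ S ∈ A ∧ S ⊆ P := Finset.mem_filter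

lemma csize_le {A : Finset (Finset α)} {H : Finset α}
    (h : ∀ S ∈ A, (H ∩ S).Nonempty) : csize A ≤ H.card :=
  Nat.sInf_le ⟨H, rfl, h⟩

lemma csize_spec [Fintype α] {A : Finset (Finset α)} (hne : ∀ S ∈ A, S.Nonempty) :
    ∃ H : Finset α, H.card = csize A ∧ ∀ S ∈ A, (H ∩ S).Nonempty := by
  have : csize A ∈ {k | ∃ H : Finset α, H.card = k ∧ ∀ S ∈ A, (H ∩ S).Nonempty} := by
    apply Nat.sInf_mem
    exact ⟨(Finset.univ : Finset α).card, Finset.univ, rfl, fun S hS => by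
      simpa [Finset.univ_inter] using hne S hS⟩
  exact this

lemma csize_empty : csize (∅ : Finset (Finset α)) = 0 := by
  apply Nat.sInf_eq_zero.mpr; left; exact ⟨∅, rfl, by simp⟩

lemma csize_pos [Fintype α] {A : Finset (Finset α)} (hA : A.Nonempty)
    (hne : ∀ S ∈ A, S.Nonempty) : 1 ≤ csize A := by
  by_contra h
  push_neg at h
  interval_cases h' : csize A
  obtain ⟨H, hcard, hhit⟩ := csize_spec hne
  rw [h'] at hcard
  obtain ⟨S, hS⟩ := hA
  have := hhit S hS
  rw [Finset.card_eq_zero.mp hcard] at this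
  simp at this

lemma restrict_ssubset {B : Finset (Finset α)} {X S : Finset α}
    (hS : S ∈ B) (hnot : ¬ S ⊆ X) : (restrict B X).card < B.card := by
  apply Finset.card_lt_card
  rw [Finset.ssubset_def]
  exact ⟨Finset.filter_subset _ _, fun hsub => hnot (mem_restrict.mp (hsub hS)).2⟩


lemma untop'_min (s : Finset ℕ) (h : s.Nonempty) : s.min.untopD 0 = s.min' h := by
  rw [← Finset.coe_min' h, WithTop.untopD_coe]

lemma setcon_eq_csize [Fintype α] :
    ∀ n (B : Finset (Finset α)) (P : Finset α), B.card ≤ n →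
      (∀ S ∈ B, S.Nonempty) → (∀ S ∈ B, S ⊆ P) →
      (∀ S ∈ B, ∀ S' : Finset α, S ⊆ S' → S' ⊆ P → S' ∈ B) →
      setcon B = csize B := by
  intro n
  induction n with
  | zero =>
    intro B P hcard _ _ _
    have hB : B = ∅ := Finset.card_eq_zero.mp (Nat.le_zero.mp hcard)
    rw [hB, setcon_empty, csize_empty]
  | succ n ih =>
    intro B P hcard hne hsub hsc
    by_cases hB : B = ∅
    · rw [hB, setcon_empty, csize_empty]
    have hBne : B.Nonempty := Finset.nonempty_iff_ne_empty.mpr hB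
    have hc1 : 1 ≤ csize B := csize_pos hBne hne
    rw [setcon_ne hB]
    apply le_antisymm
    · -- setcon ≤ csize
      have : (B.attach.sup fun S =>
          (S.1.attach.image fun a => setcon (restrict B (S.1.erase a.1))).min.untopD 0)
            ≤ csize B - 1 := by
        apply Finset.sup_le
        rintro ⟨S, hS⟩ -
        show ((S.attach.image fun a => setcon (restrict B (S.erase a.1))).min.untopD 0) ≤ csize B - 1
        obtain ⟨H, hHcard, hHhit⟩ := csize_spec hne
        obtain ⟨a, ha⟩ := hHhit S hS
        rw [Finset.mem_inter] at ha
        -- the image is nonempty since S is nonempty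
        have hSne : S.attach.Nonempty := Finset.attach_nonempty_iff.mpr (hne S hS)
        have himg : (S.attach.image fun a => setcon (restrict B (S.erase a.1))).Nonempty :=
          hSne.image _
        have hmem : setcon (restrict B (S.erase a)) ∈
            S.attach.image fun a => setcon (restrict B (S.erase a.1)) :=
          Finset.mem_image_of_mem _ (Finset.mem_attach _ ⟨a, ha.2⟩)
        have hval : setcon (restrict B (S.erase a)) ≤ csize B - 1 := by
          have hlt : (restrict B (S.erase a)).card < B.card :=
            restrict_ssubset hS (fun h => Finset.notMem_erase a S (h ha.2))
          have hrec := ih (restrict B (S.erase a)) (S.erase a)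
            (by omega)
            (fun T hT => hne T (mem_restrict.mp hT).1)
            (fun T hT => (mem_restrict.mp hT).2)
            (fun T hT S' h1 h2 => mem_restrict.mpr
              ⟨hsc T (mem_restrict.mp hT).1 S' h1 ((h2.trans (Finset.erase_subset a S)).trans (hsub S hS)), h2⟩)
          rw [hrec]
          have : csize (restrict B (S.erase a)) ≤ (H.erase a).card := by
            apply csize_le
            intro T hT
            obtain ⟨b, hb⟩ := hHhit T (mem_restrict.mp hT).1
            rw [Finset.mem_inter] at hb
            refine ⟨b, Finset.mem_inter.mpr ⟨Finset.mem_erase.mpr ⟨?_, hb.1⟩, hb.2⟩⟩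
            rintro rfl
            exact Finset.notMem_erase b S ((mem_restrict.mp hT).2 hb.2)
          rw [Finset.card_erase_of_mem ha.1, hHcard] at this
          exact this
        rw [untop'_min _ himg]
        exact (Finset.min'_le _ _ hmem).trans hval
      omega
    · -- csize ≤ setcon
      obtain ⟨S0, hS0⟩ := hBne
      have hP : P ∈ B := hsc S0 hS0 P (hsub S0 hS0) le_rfl
      have hPne : P.Nonempty := (hne S0 hS0).mono (hsub S0 hS0)
      have hle : (P.attach.image fun a => setcon (restrict B (P.erase a.1))).min.untopD 0
          ≤ B.attach.sup fun S =>
            (S.1.attach.image fun a => setcon (restrict B (S.1.erase a.1))).min.untopD 0 := by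
        have h := Finset.le_sup (f := fun S : {x // x ∈ B} =>
          (S.1.attach.image fun a => setcon (restrict B (S.1.erase a.1))).min.untopD 0)
          (Finset.mem_attach _ ⟨P, hP⟩)
        exact h
      have hPge : csize B - 1 ≤
          (P.attach.image fun a => setcon (restrict B (P.erase a.1))).min.untopD 0 := by
        have hPa : P.attach.Nonempty := Finset.attach_nonempty_iff.mpr hPne
        have himg : (P.attach.image fun a => setcon (restrict B (P.erase a.1))).Nonempty :=
          hPa.image _
        rw [untop'_min _ himg]
        apply Finset.le_min'
        intro y hy
        rw [Finset.mem_image] at hy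
        obtain ⟨⟨a, haP⟩, -, rfl⟩ := hy
        have hlt : (restrict B (P.erase a)).card < B.card :=
          restrict_ssubset hP (fun h => Finset.notMem_erase a P (h haP))
        have hBane : ∀ T ∈ restrict B (P.erase a), T.Nonempty :=
          fun T hT => hne T (mem_restrict.mp hT).1
        have hrec := ih (restrict B (P.erase a)) (P.erase a)
          (by omega) hBane
          (fun T hT => (mem_restrict.mp hT).2)
          (fun T hT S' h1 h2 => mem_restrict.mpr
            ⟨hsc T (mem_restrict.mp hT).1 S' h1 (h2.trans (Finset.erase_subset a P)), h2⟩)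
        rw [hrec]
        obtain ⟨H, hHcard, hHhit⟩ := csize_spec hBane
        have : csize B ≤ (insert a H).card := by
          apply csize_le
          intro T hT
          by_cases haT : a ∈ T
          · exact ⟨a, Finset.mem_inter.mpr ⟨Finset.mem_insert_self a H, haT⟩⟩
          · have : T ∈ restrict B (P.erase a) := mem_restrict.mpr
              ⟨hT, fun x hx => Finset.mem_erase.mpr ⟨fun h => haT (h ▸ hx), hsub T hT hx⟩⟩
            obtain ⟨b, hb⟩ := hHhit T this
            rw [Finset.mem_inter] at hb
            exact ⟨b, Finset.mem_inter.mpr ⟨Finset.mem_insert_of_mem hb.1, hb.2⟩⟩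
        have hic := Finset.card_insert_le a H
        omega
      omega

lemma mem_restrictTo {A : Finset (Finset α)} {P Q S : Finset α} :
    S ∈ restrictTo A P Q ↔ (S ∈ A ∧ S ⊆ P) ∧ (S ∩ Q).Nonempty := by
  rw [restrictTo, Finset.mem_filter, mem_restrict]

/-- Every superset-closed adversary is fair. -/
theorem supersetClosed_isFair [Fintype α] (A : Finset (Finset α))
    (hne : ∀ S ∈ A, S.Nonempty)
    (hsc : ∀ S ∈ A, ∀ S' : Finset α, S ⊆ S' → S' ∈ A) :
    ∀ P Q : Finset α, Q ⊆ P →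
      setcon (restrictTo A P Q) = min Q.card (setcon (restrict A P)) := by
  intro P Q hQP
  have hBne : ∀ S ∈ restrict A P, S.Nonempty := fun S hS => hne S (mem_restrict.mp hS).1
  have hBsub : ∀ S ∈ restrict A P, S ⊆ P := fun S hS => (mem_restrict.mp hS).2
  have hBsc : ∀ S ∈ restrict A P, ∀ S' : Finset α, S ⊆ S' → S' ⊆ P → S' ∈ restrict A P :=
    fun S hS S' h1 h2 => mem_restrict.mpr ⟨hsc S (mem_restrict.mp hS).1 S' h1, h2⟩
  have hB'ne : ∀ S ∈ restrictTo A P Q, S.Nonempty := fun S hS => hne S (mem_restrictTo.mp hS).1.1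
  have hB'sub : ∀ S ∈ restrictTo A P Q, S ⊆ P := fun S hS => (mem_restrictTo.mp hS).1.2
  have hB'sc : ∀ S ∈ restrictTo A P Q, ∀ S' : Finset α, S ⊆ S' → S' ⊆ P → S' ∈ restrictTo A P Q := by
    intro S hS S' h1 h2
    obtain ⟨⟨hSA, -⟩, hSQ⟩ := mem_restrictTo.mp hS
    exact mem_restrictTo.mpr ⟨⟨hsc S hSA S' h1, h2⟩,
      hSQ.mono (Finset.inter_subset_inter h1 le_rfl)⟩
  rw [setcon_eq_csize (restrictTo A P Q).card (restrictTo A P Q) P le_rfl hB'ne hB'sub hB'sc,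
    setcon_eq_csize (restrict A P).card (restrict A P) P le_rfl hBne hBsub hBsc]
  have hB'B : restrictTo A P Q ⊆ restrict A P := Finset.filter_subset _ _
  apply le_antisymm
  · -- csize B' ≤ min
    apply le_min
    · exact csize_le fun S hS => ((mem_restrictTo.mp hS).2).mono
        (Finset.inter_comm S Q).le
    · obtain ⟨H, hHcard, hHhit⟩ := csize_spec hBne
      rw [← hHcard]
      exact csize_le fun S hS => hHhit S (hB'B hS)
  · -- min ≤ csize B'
    obtain ⟨H, hHcard, hHhit⟩ := csize_spec hB'ne
    by_cases hall : ∀ S ∈ restrict A P, (H ∩ S).Nonempty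
    · calc min Q.card (csize (restrict A P)) ≤ csize (restrict A P) := min_le_right _ _
        _ ≤ H.card := csize_le hall
        _ = csize (restrictTo A P Q) := hHcard
    · push_neg at hall
      obtain ⟨S, hS, hSH⟩ := hall
      have hQH : Q ⊆ H := by
        intro q hq
        have hq' : insert q S ∈ restrictTo A P Q := by
          refine mem_restrictTo.mpr ⟨⟨hsc S (mem_restrict.mp hS).1 _ (Finset.subset_insert q S),
            Finset.insert_subset (hQP hq) (mem_restrict.mp hS).2⟩,
            ⟨q, Finset.mem_inter.mpr ⟨Finset.mem_insert_self q S, hq⟩⟩⟩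
        obtain ⟨b, hb⟩ := hHhit _ hq'
        rw [Finset.mem_inter, Finset.mem_insert] at hb
        rcases hb.2 with rfl | hbS
        · exact hb.1
        · exact absurd (Finset.mem_inter.mpr ⟨hb.1, hbS⟩) (by rw [hSH]; simp)
      calc min Q.card (csize (restrict A P)) ≤ Q.card := min_le_left _ _
        _ ≤ H.card := Finset.card_le_card hQH
        _ = csize (restrictTo A P Q) := hHcard
end

section
/- Let A be a symmetric nonempty adversary over a finite set Π. For all live sets S, S' ∈ A with |S| = |S'| and all p ∈ S, p' ∈ S', one has setcon(A|_{S∖{p}}) = setcon(A|_{S'∖{p'}}). -/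
variable {α : Type*} [DecidableEq α]

lemma restrict_restrict (A : Finset (Finset α)) {P Q : Finset α} (h : Q ⊆ P) :
    restrict (restrict A P) Q = restrict A Q := by
  ext T
  simp only [restrict, Finset.mem_filter]
  exact ⟨fun ⟨⟨h1, _⟩, h3⟩ => ⟨h1, h3⟩, fun ⟨h1, h2⟩ => ⟨⟨h1, h2.trans h⟩, h2⟩⟩

lemma setcon_restrict_le (A : Finset (Finset α))
    (hne : ∀ S ∈ A, S.Nonempty)
    (hsym : ∀ S ∈ A, ∀ S' : Finset α, S'.card = S.card → S' ∈ A) :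
    ∀ n (P P' : Finset α), P.card ≤ n → P.card = P'.card →
      setcon (restrict A P) ≤ setcon (restrict A P') := by
  intro n
  induction n with
  | zero =>
    intro P P' hle hcard
    have hP : P = ∅ := Finset.card_eq_zero.mp (Nat.le_zero.mp hle)
    have hP' : P' = ∅ := Finset.card_eq_zero.mp (by omega)
    rw [hP, hP']
  | succ n ih =>
    intro P P' hle hcard
    have ihEq : ∀ (Q Q' : Finset α), Q.card ≤ n → Q.card = Q'.card →
        setcon (restrict A Q) = setcon (restrict A Q') := fun Q Q' h1 h2 =>
      le_antisymm (ih Q Q' h1 h2) (ih Q' Q (by omega) h2.symm)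
    by_cases hB : restrict A P = ∅
    · rw [hB, setcon]; simp
    · have hB' : restrict A P' ≠ ∅ := by
        intro h
        obtain ⟨T, hT⟩ := Finset.nonempty_iff_ne_empty.mpr hB
        simp only [restrict, Finset.mem_filter] at hT
        have : T.card ≤ P'.card := by
          have := Finset.card_le_card hT.2; omega
        obtain ⟨T', hT'sub, hT'card⟩ := Finset.exists_subset_card_eq this
        have : T' ∈ restrict A P' := by
          simp only [restrict, Finset.mem_filter]
          exact ⟨hsym T hT.1 T' hT'card, hT'sub⟩
        rw [h] at this; exact absurd this (Finset.notMem_empty _)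
      rw [setcon, setcon, if_neg hB, if_neg hB']
      -- evaluation of the inner min
      have eval : ∀ (R T : Finset α), T ∈ restrict A R → T.card ≤ n + 1 →
          ∀ b ∈ T,
          ((T.attach.image fun a =>
              setcon (restrict (restrict A R) (T.erase a.1))).min.untopD 0)
            = setcon (restrict A (T.erase b)) := by
        intro R T hT hTcard b hb
        simp only [restrict, Finset.mem_filter] at hT
        have hconst : ∀ a ∈ T.attach,
            setcon (restrict (restrict A R) (T.erase a.1))
              = setcon (restrict A (T.erase b)) := by
          intro a _
          rw [restrict_restrict A ((Finset.erase_subset _ _).trans hT.2)]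
          exact ihEq (T.erase a.1) (T.erase b)
            (by rw [Finset.card_erase_of_mem a.2]; omega)
            (by rw [Finset.card_erase_of_mem a.2, Finset.card_erase_of_mem hb])
        rw [Finset.image_congr hconst, Finset.image_const
          (Finset.attach_nonempty_iff.mpr ⟨b, hb⟩), Finset.min_singleton]
        rfl
      apply Nat.add_le_add_left
      apply Finset.sup_le
      intro S _
      have hSmem := S.2
      simp only [restrict, Finset.mem_filter] at hSmem
      have hSA := hSmem.1
      have hSne := hne _ hSA
      obtain ⟨b, hb⟩ := hSne
      have hScard : S.1.card ≤ P.card := Finset.card_le_card hSmem.2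
      -- choose S' ⊆ P' of the same cardinality
      obtain ⟨S', hS'sub, hS'card⟩ :=
        Finset.exists_subset_card_eq (show S.1.card ≤ P'.card by omega)
      have hS'A : S' ∈ A := hsym _ hSA S' hS'card
      have hS'mem : S' ∈ restrict A P' := by
        simp only [restrict, Finset.mem_filter]; exact ⟨hS'A, hS'sub⟩
      obtain ⟨b', hb'⟩ := hne _ hS'A
      rw [eval P S.1 S.2 (by omega) b hb]
      have step : setcon (restrict A (S.1.erase b))
          ≤ setcon (restrict A (S'.erase b')) := by
        apply ih
        · rw [Finset.card_erase_of_mem hb]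
          have : 1 ≤ S.1.card := Finset.card_pos.mpr ⟨b, hb⟩
          omega
        · rw [Finset.card_erase_of_mem hb, Finset.card_erase_of_mem hb', hS'card]
      refine step.trans ?_
      have h2 := Finset.le_sup (f := fun S : {x // x ∈ restrict A P'} =>
        ((S.1.attach.image fun a =>
          setcon (restrict (restrict A P') (S.1.erase a.1))).min.untopD 0))
        (Finset.mem_attach _ ⟨S', hS'mem⟩)
      beta_reduce at h2
      rw [eval P' S' hS'mem (by omega) b' hb'] at h2
      exact h2

/-- for a symmetric nonempty adversary and live sets `S, S'` of equal
cardinality, `setcon (A|_{S∖{p}}) = setcon (A|_{S'∖{p'}})` for all `p ∈ S`, `p' ∈ S'`. -/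
theorem setcon_erase_eq_of_symmetric [Fintype α] (A : Finset (Finset α))
    (hA : A.Nonempty) (hne : ∀ S ∈ A, S.Nonempty)
    (hsym : ∀ S ∈ A, ∀ S' : Finset α, S'.card = S.card → S' ∈ A)
    (S S' : Finset α) (hS : S ∈ A) (hS' : S' ∈ A) (hcard : S.card = S'.card)
    (p p' : α) (hp : p ∈ S) (hp' : p' ∈ S') :
    setcon (restrict A (S.erase p)) = setcon (restrict A (S'.erase p')) := by
  have h1 : (S.erase p).card = (S'.erase p').card := by
    rw [Finset.card_erase_of_mem hp, Finset.card_erase_of_mem hp', hcard]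
  exact le_antisymm
    (setcon_restrict_le A hne hsym (S.erase p).card _ _ le_rfl h1)
    (setcon_restrict_le A hne hsym (S'.erase p').card _ _ le_rfl h1.symm)
end

section
/- For every nonempty adversary A over a finite set Π, the maximum in the definition of setcon can be attained at a locally maximal live set: there exist S ∈ A with no S' ∈ A satisfying S ⊊ S', and a ∈ S, such that setcon(A) = 1 + setcon(A|_{S∖{a}}). -/
/-!
The value `min_{a ∈ S} setcon (A|_{S \ {a}})` of a live set `S` is monotone in `S`: if `S ⊆ T`,
any `a ∈ T` gives a set `S \ {b}` inside `T \ {a}` (take `b = a` if `a ∈ S`, any `b ∈ S`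
otherwise), and `setcon` is monotone. Hence replacing a live set attaining the maximum by a
locally maximal live set above it keeps the maximum attained.
-/

variable {α : Type*} [DecidableEq α]

/-- The term `min_{a ∈ S} setcon (A|_{S \ {a}})` maximised in `setcon A`; it is `0` for `S = ∅`. -/
def setconAt (A : Finset (Finset α)) (S : Finset α) : ℕ :=
  (S.attach.image fun a => setcon (restrict A (S.erase a.1))).min.untopD 0

lemma setcon_eq_one_add_sup {A : Finset (Finset α)} (hA : A.Nonempty) :
    setcon A = 1 + A.sup (setconAt A) := by
  rw [setcon, if_neg hA.ne_empty, ← Finset.sup_attach A (setconAt A)]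
  rfl

lemma restrict_mono {A B : Finset (Finset α)} {P Q : Finset α} (hAB : A ⊆ B) (hPQ : P ⊆ Q) :
    restrict A P ⊆ restrict B Q := fun S hS => by
  rw [restrict, Finset.mem_filter] at hS ⊢
  exact ⟨hAB hS.1, hS.2.trans hPQ⟩

lemma restrict_erase_ssubset {A : Finset (Finset α)} {S : Finset α} (hS : S ∈ A) {a : α}
    (ha : a ∈ S) : restrict A (S.erase a) ⊂ A := by
  refine ⟨Finset.filter_subset _ _, fun hsub => ?_⟩
  have hS' := hsub hS
  rw [restrict, Finset.mem_filter] at hS'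
  exact Finset.notMem_erase a S (hS'.2 ha)

section setconAt

variable {A : Finset (Finset α)} {S : Finset α}

lemma setconAt_le {a : α} (ha : a ∈ S) : setconAt A S ≤ setcon (restrict A (S.erase a)) := by
  have hmem : setcon (restrict A (S.erase a)) ∈
      S.attach.image fun b => setcon (restrict A (S.erase b.1)) :=
    Finset.mem_image_of_mem _ (Finset.mem_attach S ⟨a, ha⟩)
  rw [setconAt, ← Finset.coe_min' ⟨_, hmem⟩]
  exact Finset.min'_le _ _ hmem

lemma exists_setconAt_eq (hS : S.Nonempty) :
    ∃ a ∈ S, setconAt A S = setcon (restrict A (S.erase a)) := by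
  have hne : (S.attach.image fun a => setcon (restrict A (S.erase a.1))).Nonempty :=
    hS.attach.image _
  obtain ⟨a, -, ha⟩ := Finset.mem_image.mp (Finset.min'_mem _ hne)
  refine ⟨a.1, a.2, ?_⟩
  rw [setconAt, ← Finset.coe_min' hne, ← ha]
  rfl

lemma setconAt_empty : setconAt A ∅ = 0 := rfl

end setconAt

lemma setcon_mono {A B : Finset (Finset α)} (hAB : A ⊆ B) : setcon A ≤ setcon B := by
  induction B using Finset.strongInduction generalizing A with
  | _ B ih =>
    rcases A.eq_empty_or_nonempty with rfl | hA
    · rw [setcon, if_pos rfl]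
      exact Nat.zero_le _
    rw [setcon_eq_one_add_sup hA, setcon_eq_one_add_sup (hA.mono hAB)]
    refine Nat.add_le_add_left (Finset.sup_le fun S hS => ?_) 1
    refine le_trans ?_ (Finset.le_sup (hAB hS))
    rcases S.eq_empty_or_nonempty with rfl | hSne
    · simp [setconAt_empty]
    obtain ⟨a, ha, hmin⟩ := exists_setconAt_eq (A := B) hSne
    rw [hmin]
    exact (setconAt_le ha).trans <|
      ih _ (restrict_erase_ssubset (hAB hS) ha) (restrict_mono hAB subset_rfl)

lemma setconAt_mono (A : Finset (Finset α)) : Monotone (setconAt A) := by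
  intro S T hST
  rcases S.eq_empty_or_nonempty with rfl | ⟨b, hb⟩
  · simp [setconAt_empty]
  obtain ⟨a, ha, hmin⟩ := exists_setconAt_eq (A := A) ⟨b, hST hb⟩
  rw [hmin]
  by_cases haS : a ∈ S
  · exact (setconAt_le haS).trans
      (setcon_mono (restrict_mono subset_rfl (Finset.erase_subset_erase a hST)))
  · have hsub : S.erase b ⊆ T.erase a :=
      (Finset.erase_subset b S).trans (Finset.subset_erase.mpr ⟨hST, haS⟩)
    exact (setconAt_le hb).trans (setcon_mono (restrict_mono subset_rfl hsub))

lemma Finset.exists_maximal_sup_eq {ι β : Type*} [PartialOrder ι] [LinearOrder β] [OrderBot β]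
    {s : Finset ι} (hs : s.Nonempty) {f : ι → β} (hf : Monotone f) :
    ∃ i, Maximal (· ∈ s) i ∧ s.sup f = f i := by
  obtain ⟨j, hj, hsup⟩ := s.exists_mem_eq_sup hs f
  obtain ⟨i, hji, hi⟩ := s.exists_le_maximal hj
  exact ⟨i, hi, le_antisymm (hsup ▸ hf hji) (Finset.le_sup hi.prop)⟩

theorem setcon_attained_at_locally_maximal_general (A : Finset (Finset α))
    (hA : A.Nonempty) (hne : ∀ S ∈ A, S.Nonempty) :
    ∃ S ∈ A, (¬ ∃ S' ∈ A, S ⊂ S') ∧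
      ∃ a ∈ S, setcon A = 1 + setcon (restrict A (S.erase a)) := by
  obtain ⟨S, hSmax, hsup⟩ := Finset.exists_maximal_sup_eq hA (setconAt_mono A)
  obtain ⟨a, ha, hmin⟩ := exists_setconAt_eq (A := A) (hne S hSmax.prop)
  refine ⟨S, hSmax.prop, fun ⟨S', hS', hSS'⟩ => hSmax.not_gt hS' hSS', a, ha, ?_⟩
  rw [setcon_eq_one_add_sup hA, hsup, hmin]

/-- for a nonempty adversary, the max in the definition of `setcon`
can be attained at a locally maximal live set. -/
theorem setcon_attained_at_locally_maximal [Fintype α] (A : Finset (Finset α))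
    (hA : A.Nonempty) (hne : ∀ S ∈ A, S.Nonempty) :
    ∃ S ∈ A, (¬ ∃ S' ∈ A, S ⊂ S') ∧
      ∃ a ∈ S, setcon A = 1 + setcon (restrict A (S.erase a)) :=
  setcon_attained_at_locally_maximal_general A hA hne
end

section
/- Hitting-set form of fairness for superset-closed adversaries: let A be a superset-closed adversary over a finite set Π and let Q ⊆ Π. Then the minimal hitting set size of {S ∈ A : S ∩ Q ≠ ∅} equals min(|Q|, csize(A)). -/
variable {α : Type*} [DecidableEq α]

/-- hitting-set form of fairness for superset-closed adversaries:
`csize {S ∈ A : S ∩ Q ≠ ∅} = min |Q| (csize A)`. -/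
theorem csize_filter_inter_of_supersetClosed [Fintype α] (A : Finset (Finset α))
    (hne : ∀ S ∈ A, S.Nonempty)
    (hsc : ∀ S ∈ A, ∀ S' : Finset α, S ⊆ S' → S' ∈ A) (Q : Finset α) :
    csize (A.filter fun S => (S ∩ Q).Nonempty) = min Q.card (csize A) := by
  set B := A.filter fun S => (S ∩ Q).Nonempty with hB
  have hQhit : Q.card ∈ {k | ∃ H : Finset α, H.card = k ∧ ∀ S ∈ B, (H ∩ S).Nonempty} := by
    refine ⟨Q, rfl, fun S hS => ?_⟩
    rw [hB, Finset.mem_filter] at hS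
    obtain ⟨x, hx⟩ := hS.2
    rw [Finset.mem_inter] at hx
    exact ⟨x, Finset.mem_inter.2 ⟨hx.2, hx.1⟩⟩
  have hAne : {k | ∃ H : Finset α, H.card = k ∧ ∀ S ∈ A, (H ∩ S).Nonempty}.Nonempty := by
    refine ⟨Finset.univ.card, Finset.univ, rfl, fun S hS => ?_⟩
    obtain ⟨x, hx⟩ := hne S hS
    exact ⟨x, Finset.mem_inter.2 ⟨Finset.mem_univ x, hx⟩⟩
  apply le_antisymm
  · apply le_min
    · exact Nat.sInf_le hQhit
    · obtain ⟨H, hcard, hhit⟩ := Nat.sInf_mem hAne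
      exact Nat.sInf_le ⟨H, hcard, fun S hS => hhit S (Finset.mem_of_mem_filter S hS)⟩
  · refine le_csInf ⟨Q.card, hQhit⟩ ?_
    rintro k ⟨H, rfl, hhit⟩
    by_contra hlt
    push_neg at hlt
    rw [lt_min_iff] at hlt
    obtain ⟨hq, ha⟩ := hlt
    -- H does not hit A
    have hnot : ∃ S ∈ A, ¬ (H ∩ S).Nonempty := by
      by_contra h
      push_neg at h
      have : csize A ≤ H.card := Nat.sInf_le (show H.card ∈ {k | ∃ H' : Finset α, H'.card = k ∧ ∀ S ∈ A, (H' ∩ S).Nonempty} from ⟨H, rfl, h⟩)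
      exact absurd this (not_le.2 ha)
    obtain ⟨S, hSA, hHS⟩ := hnot
    have hQH : ∃ q ∈ Q, q ∉ H := by
      by_contra h
      push_neg at h
      exact absurd (Finset.card_le_card h) (not_le.2 hq)
    obtain ⟨q, hqQ, hqH⟩ := hQH
    have hSA' : insert q S ∈ A := hsc S hSA _ (Finset.subset_insert q S)
    have hSB : insert q S ∈ B := by
      rw [hB, Finset.mem_filter]
      exact ⟨hSA', ⟨q, Finset.mem_inter.2 ⟨Finset.mem_insert_self q S, hqQ⟩⟩⟩
    obtain ⟨x, hx⟩ := hhit _ hSB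
    rw [Finset.mem_inter, Finset.mem_insert] at hx
    rcases hx.2 with h | h
    · exact hqH (h ▸ hx.1)
    · exact hHS ⟨x, Finset.mem_inter.2 ⟨hx.1, h⟩⟩
end
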